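/- arXiv:2004.07184 — 2 statements merged into one kernel-verified Lean document; each statement's English description precedes it below -/
import Mathlib

section
/- The strong basin of an attractor is forward-invariant under the asynchronous transition relation: if A is an attractor, s ∈ strongBasin(A), and step s s', then s' ∈ strongBasin(A). -/
def step {n : ℕ} (f : Fin n → (Fin n → Bool) → Bool) (s s' : Fin n → Bool) : Prop :=
  ∃ i : Fin n, s' = Function.update s i (f i s)

def reach {n : ℕ} (f : Fin n → (Fin n → Bool) → Bool) (s : Fin n → Bool) :
    Set (Fin n → Bool) :=
  {s' | Relation.ReflTransGen (step f) s s'}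

def IsAttractor {n : ℕ} (f : Fin n → (Fin n → Bool) → Bool)
    (A : Set (Fin n → Bool)) : Prop :=
  A.Nonempty ∧ ∀ s ∈ A, reach f s = A

def weakBasin {n : ℕ} (f : Fin n → (Fin n → Bool) → Bool)
    (A : Set (Fin n → Bool)) : Set (Fin n → Bool) :=
  {s | (reach f s ∩ A).Nonempty}

def strongBasin {n : ℕ} (f : Fin n → (Fin n → Bool) → Bool)
    (A : Set (Fin n → Bool)) : Set (Fin n → Bool) :=
  {s | (reach f s ∩ A).Nonempty ∧
    ∀ A', IsAttractor f A' → A' ≠ A → reach f s ∩ A' = ∅}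


/-!
Every state reaches some attractor: a state `t` reachable from `s` whose reachable set has minimal
size is one, its reachable set being minimal under inclusion. A state of the strong basin of `A`
therefore sees only `A` among the attractors, and since reachable sets shrink along transitions,
every state reachable from it reaches an attractor, which can only be `A`, and no other.
-/

section BooleanNetwork

variable {n : ℕ} (f : Fin n → (Fin n → Bool) → Bool)

lemma mem_reach_self (s : Fin n → Bool) : s ∈ reach f s :=
  Relation.ReflTransGen.refl

variable {f} in
lemma reach_subset_of_mem {s t : Fin n → Bool} (h : t ∈ reach f s) : reach f t ⊆ reach f s :=
  fun _ hu => h.trans hu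

lemma exists_isAttractor_reach_inter_nonempty (s : Fin n → Bool) :
    ∃ A, IsAttractor f A ∧ (reach f s ∩ A).Nonempty := by
  obtain ⟨t, hst, hmin⟩ := Set.exists_min_image (reach f s) (fun t => (reach f t).ncard)
    (Set.toFinite _) ⟨s, mem_reach_self f s⟩
  refine ⟨reach f t, ⟨⟨t, mem_reach_self f t⟩, fun u htu => ?_⟩,
    t, hst, mem_reach_self f t⟩
  exact Set.eq_of_subset_of_ncard_le (reach_subset_of_mem htu)
    (hmin u (reach_subset_of_mem hst htu)) (Set.toFinite _)

variable {f} in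
lemma mem_strongBasin_of_reach_subset {A : Set (Fin n → Bool)} {s t : Fin n → Bool}
    (hs : s ∈ strongBasin f A) (hts : reach f t ⊆ reach f s) : t ∈ strongBasin f A := by
  have avoids (A' : Set (Fin n → Bool)) (hA' : IsAttractor f A') (hne : A' ≠ A) :
      reach f t ∩ A' = ∅ :=
    Set.subset_empty_iff.mp (hs.2 A' hA' hne ▸ Set.inter_subset_inter_left A' hts)
  obtain ⟨A', hA', hmeet⟩ := exists_isAttractor_reach_inter_nonempty f t
  obtain rfl : A' = A := by
    by_contra hne
    exact hmeet.ne_empty (avoids A' hA' hne)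
  exact ⟨hmeet, avoids⟩

end BooleanNetwork

theorem strongBasin_forward_invariant_general {n : ℕ} (f : Fin n → (Fin n → Bool) → Bool)
    (A : Set (Fin n → Bool))
    (s s' : Fin n → Bool) (hs : s ∈ strongBasin f A) (hstep : step f s s') :
    s' ∈ strongBasin f A :=
  mem_strongBasin_of_reach_subset hs (reach_subset_of_mem (Relation.ReflTransGen.single hstep))

theorem strongBasin_forward_invariant {n : ℕ} (f : Fin n → (Fin n → Bool) → Bool)
    (A : Set (Fin n → Bool)) (hA : IsAttractor f A)
    (s s' : Fin n → Bool) (hs : s ∈ strongBasin f A) (hstep : step f s s') :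
    s' ∈ strongBasin f A :=
  strongBasin_forward_invariant_general f A s s' hs hstep
end

section
/- An attractor of the original network contained in the controlled state space remains an attractor of the controlled network: for a control C = (O, I), if A is an attractor of the asynchronous transition system of G (i.e., A is nonempty and reach(s) = A for every s ∈ A) and A ⊆ S|_C, then A is an attractor of the asynchronous transition system of G|_C (i.e., reachC(s) = A for every s ∈ A). -/
def controlledF {n : ℕ} (O I : Finset (Fin n)) (f : Fin n → (Fin n → Bool) → Bool)
    (i : Fin n) (s : Fin n → Bool) : Bool :=
  if i ∈ O then false else if i ∈ I then true else f i s

def applyControl {n : ℕ} (O I : Finset (Fin n)) (s : Fin n → Bool) :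
    Fin n → Bool :=
  fun i => if i ∈ O then false else if i ∈ I then true else s i

def controlledSpace {n : ℕ} (O I : Finset (Fin n)) : Set (Fin n → Bool) :=
  {s | (∀ i ∈ O, s i = false) ∧ (∀ i ∈ I, s i = true)}

/-!
An attractor `A` is closed under the steps of `f`. Inside `S|_C` a step of the controlled
network either changes nothing or is a step of `f`, and a step of `f` that ends in `S|_C` is a
step of the controlled network. Hence `A` is also closed under controlled steps, and every
`f`-path inside `A` is a controlled path.
-/

namespace Relation.ReflTransGen

variable {α : Type*} {r p : α → α → Prop} {A : Set α} {a b : α}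

theorem mem_of_closed (hA : ∀ x ∈ A, ∀ y, r x y → y ∈ A) (h : ReflTransGen r a b)
    (ha : a ∈ A) : b ∈ A := by
  induction h with
  | refl => exact ha
  | tail _ hbc ih => exact hA _ ih _ hbc

theorem mono_on_closed (hA : ∀ x ∈ A, ∀ y, r x y → y ∈ A)
    (hrp : ∀ x ∈ A, ∀ y, r x y → p x y) (h : ReflTransGen r a b) (ha : a ∈ A) :
    ReflTransGen p a b := by
  induction h with
  | refl => exact .refl
  | tail hab hbc ih => exact ih.tail (hrp _ (hab.mem_of_closed hA ha) _ hbc)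

end Relation.ReflTransGen

theorem IsAttractor.mem_of_step {n : ℕ} {f : Fin n → (Fin n → Bool) → Bool}
    {A : Set (Fin n → Bool)} (hA : IsAttractor f A) {s s' : Fin n → Bool} (hs : s ∈ A)
    (h : step f s s') : s' ∈ A :=
  hA.2 s hs ▸ Relation.ReflTransGen.single h

section Control

variable {n : ℕ} {O I : Finset (Fin n)} {f : Fin n → (Fin n → Bool) → Bool}
  {s s' : Fin n → Bool}

theorem step_controlledF_of_step (hs' : s' ∈ controlledSpace O I) (h : step f s s') :
    step (controlledF O I f) s s' := by
  obtain ⟨i, rfl⟩ := h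
  refine ⟨i, congrArg (Function.update s i) ?_⟩
  have hfi : Function.update s i (f i s) i = f i s := Function.update_self ..
  by_cases hiO : i ∈ O
  · simp only [controlledF, if_pos hiO, ← hs'.1 i hiO, hfi]
  by_cases hiI : i ∈ I
  · simp only [controlledF, if_neg hiO, if_pos hiI, ← hs'.2 i hiI, hfi]
  · simp only [controlledF, if_neg hiO, if_neg hiI]

theorem eq_or_step_of_step_controlledF (hs : s ∈ controlledSpace O I)
    (h : step (controlledF O I f) s s') : s' = s ∨ step f s s' := by
  obtain ⟨i, rfl⟩ := h
  by_cases hiO : i ∈ O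
  · left
    simp only [controlledF, if_pos hiO, ← hs.1 i hiO, Function.update_eq_self]
  by_cases hiI : i ∈ I
  · left
    simp only [controlledF, if_neg hiO, if_pos hiI, ← hs.2 i hiI, Function.update_eq_self]
  · right
    exact ⟨i, by simp only [controlledF, if_neg hiO, if_neg hiI]⟩

end Control

theorem attractor_preserved_under_control_general {n : ℕ}
    (f : Fin n → (Fin n → Bool) → Bool)
    (O I : Finset (Fin n))
    (A : Set (Fin n → Bool)) (hA : IsAttractor f A)
    (hsub : A ⊆ controlledSpace O I) :
    ∀ s ∈ A, reach (controlledF O I f) s = A := by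
  intro s hs
  have hclosed : ∀ x ∈ A, ∀ y, step f x y → y ∈ A := fun x hx _ => hA.mem_of_step hx
  have hclosedC : ∀ x ∈ A, ∀ y, step (controlledF O I f) x y → y ∈ A := fun x hx y hxy =>
    (eq_or_step_of_step_controlledF (hsub hx) hxy).elim (· ▸ hx) (hA.mem_of_step hx)
  refine Set.Subset.antisymm (fun t ht => ht.mem_of_closed hclosedC hs) fun t ht => ?_
  rw [← hA.2 s hs] at ht
  exact ht.mono_on_closed hclosed
    (fun x hx y hxy => step_controlledF_of_step (hsub (hclosed x hx y hxy)) hxy) hs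

theorem attractor_preserved_under_control {n : ℕ}
    (f : Fin n → (Fin n → Bool) → Bool)
    (O I : Finset (Fin n)) (hdisj : Disjoint O I)
    (A : Set (Fin n → Bool)) (hA : IsAttractor f A)
    (hsub : A ⊆ controlledSpace O I) :
    ∀ s ∈ A, reach (controlledF O I f) s = A :=
  attractor_preserved_under_control_general f O I A hA hsub
end
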